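/- Let G be a finite simple graph and S ⊆ V(G) such that G ⊕ S is triangle-free, |S| ≥ 3, and S is a clique in G. Then for any two distinct vertices u, v ∈ S, the set (N_G[u] ∩ N_G[v]) \ S is an independent set in G; in particular, the subgraph of G induced by N_G[u] ∩ N_G[v] is a split graph with clique part S. -/

import Mathlib

/-- The partial complement `G ⊕ S` of a simple graph `G` with respect to a vertex set `S`:
distinct vertices `u, v` are adjacent iff either they are adjacent in `G` and not both
belong to `S`, or they are nonadjacent in `G` and both belong to `S`. -/
def SimpleGraph.partialComplement {V : Type*} (G : SimpleGraph V) (S : Set V) :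
    SimpleGraph V where
  Adj u v := u ≠ v ∧ ((G.Adj u v ∧ ¬(u ∈ S ∧ v ∈ S)) ∨ (¬ G.Adj u v ∧ u ∈ S ∧ v ∈ S))
  symm := ⟨by
    intro u v h
    obtain ⟨hne, h⟩ := h
    refine ⟨hne.symm, ?_⟩
    rcases h with ⟨ha, hs⟩ | ⟨ha, hu, hv⟩
    · exact Or.inl ⟨ha.symm, fun hc => hs ⟨hc.2, hc.1⟩⟩
    · exact Or.inr ⟨fun hvu => ha hvu.symm, hv, hu⟩⟩
  loopless := ⟨fun v h => h.1 rfl⟩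

/-- An independent set in a simple graph: a set of pairwise nonadjacent vertices. -/
def SimpleGraph.IsIndepSet' {V : Type*} (G : SimpleGraph V) (A : Set V) : Prop :=
  ∀ ⦃x⦄, x ∈ A → ∀ ⦃y⦄, y ∈ A → x ≠ y → ¬ G.Adj x y

namespace SimpleGraph

variable {V : Type*} {G : SimpleGraph V} {S : Set V}

theorem partialComplement_adj_of_left_notMem {x y : V} (hadj : G.Adj x y) (hx : x ∉ S) :
    (G.partialComplement S).Adj x y :=
  ⟨hadj.ne, Or.inl ⟨hadj, fun hxy => hx hxy.1⟩⟩

theorem IsIndepSet'.mono {A B : Set V} (hB : G.IsIndepSet' B) (hAB : A ⊆ B) :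
    G.IsIndepSet' A :=
  fun _ hx _ hy hxy => hB (hAB hx) (hAB hy) hxy

/-- A `G`-triangle on `w` and two vertices outside `S` keeps all its edges in `G ⊕ S`. -/
theorem isIndepSet'_neighborSet_diff (h : (G.partialComplement S).CliqueFree 3) (w : V) :
    G.IsIndepSet' (G.neighborSet w \ S) := by
  classical
  rintro x ⟨hwx, hxS⟩ y ⟨hwy, hyS⟩ hxy hadj
  refine h {w, x, y} (is3Clique_triple_iff.mpr ⟨?_, ?_, ?_⟩)
  · exact (partialComplement_adj_of_left_notMem hwx.symm hxS).symm
  · exact (partialComplement_adj_of_left_notMem hwy.symm hyS).symm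
  · exact partialComplement_adj_of_left_notMem hadj hxS

theorem subset_insert_neighborSet_of_isClique (hS : G.IsClique S) {u : V} (hu : u ∈ S) :
    S ⊆ insert u (G.neighborSet u) := by
  intro w hw
  rcases eq_or_ne w u with rfl | hne
  · exact Set.mem_insert w _
  · exact Set.mem_insert_of_mem u (hS hu hw hne.symm)

end SimpleGraph

open SimpleGraph in
theorem clique_solution_split_structure_general {V : Type*}
    (G : SimpleGraph V) (S : Set V)
    (h : (G.partialComplement S).CliqueFree 3)
    (hclique : G.IsClique S)
    (u v : V) (hu : u ∈ S) (hv : v ∈ S) :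
    G.IsIndepSet' ((insert u (G.neighborSet u) ∩ insert v (G.neighborSet v)) \ S) ∧
    S ∪ ((insert u (G.neighborSet u) ∩ insert v (G.neighborSet v)) \ S) =
      insert u (G.neighborSet u) ∩ insert v (G.neighborSet v) := by
  refine ⟨(isIndepSet'_neighborSet_diff h u).mono ?_, Set.union_sdiff_cancel ?_⟩
  · rintro x ⟨⟨hxu, -⟩, hxS⟩
    obtain rfl | hux := hxu
    · exact absurd hu hxS
    · exact ⟨hux, hxS⟩
  · exact Set.subset_inter (subset_insert_neighborSet_of_isClique hclique hu)
      (subset_insert_neighborSet_of_isClique hclique hv)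

/-- If `G ⊕ S` is triangle-free, `|S| ≥ 3` and `S` is a clique in `G`, then for any two
distinct `u, v ∈ S`, the set `(N_G[u] ∩ N_G[v]) \ S` is an independent set in `G`;
in particular, the subgraph of `G` induced by `N_G[u] ∩ N_G[v]` is a split graph with
clique part `S`: it is partitioned into the clique `S` and an independent set. -/
theorem clique_solution_split_structure {V : Type*} [Fintype V]
    (G : SimpleGraph V) (S : Set V)
    (h : (G.partialComplement S).CliqueFree 3)
    (hcard : 3 ≤ S.ncard) (hclique : G.IsClique S)
    (u v : V) (hu : u ∈ S) (hv : v ∈ S) (huv : u ≠ v) :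
    G.IsIndepSet' ((insert u (G.neighborSet u) ∩ insert v (G.neighborSet v)) \ S) ∧
    S ∪ ((insert u (G.neighborSet u) ∩ insert v (G.neighborSet v)) \ S) =
      insert u (G.neighborSet u) ∩ insert v (G.neighborSet v) :=
  clique_solution_split_structure_general G S h hclique u v hu hv
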